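/- arXiv:1705.01084 — 4 statements merged into one kernel-verified Lean document; each statement's English description precedes it below -/
import Mathlib

section
/- Let $K$ be a field and let $v_1, v_2$ be two independent nontrivial valuations on $K$, meaning that the subring of $K$ generated by their valuation rings $\mathcal{O}_{v_1}$ and $\mathcal{O}_{v_2}$ is all of $K$. Then every $x \in K^\times$ can be written as $x = u_1 \cdot u_2$ where $u_1 \in 1 + \mathfrak{m}_{v_1}$ and $u_2 \in 1 + \mathfrak{m}_{v_2}$, i.e. $K^\times = \mathrm{U}^1_{v_1} \cdot \mathrm{U}^1_{v_2}$. -/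
/-!
Every element of `K = O₁ · O₂` (sums of products) has its `v₁`-value dominated by that of a
`v₂`-integer; inverting such elements, and using nontriviality to make the bounds strict, yields
`a` with `v₁ a` as small and `v₂ a` as large as we please. For such `a`, the element
`u₁ = (1 + x a) / (1 + a)` is `v₁`-close to `1` and `v₂`-close to `x`, and `u₂ = x / u₁`.
-/

namespace Valuation

variable {Γ₁ Γ₂ : Type*} [LinearOrderedCommGroupWithZero Γ₁] [LinearOrderedCommGroupWithZero Γ₂]

theorem exists_mem_integer_le_of_closure_eq_top {R : Type*} [Ring R]
    {v₁ : Valuation R Γ₁} {v₂ : Valuation R Γ₂}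
    (h : Subring.closure ((v₁.integer : Set R) ∪ v₂.integer) = ⊤) (t : R) :
    ∃ d ∈ v₂.integer, v₁ t ≤ v₁ d := by
  induction (h ▸ Subring.mem_top t : t ∈ Subring.closure _) using Subring.closure_induction with
  | mem x hx =>
    rcases hx with hx | hx
    · exact ⟨1, v₂.integer.one_mem, by rwa [map_one]⟩
    · exact ⟨x, hx, le_rfl⟩
  | zero => exact ⟨1, v₂.integer.one_mem, by simp⟩
  | one => exact ⟨1, v₂.integer.one_mem, le_rfl⟩
  | add x y _ _ ihx ihy =>
    obtain ⟨d₁, hd₁, hxd₁⟩ := ihx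
    obtain ⟨d₂, hd₂, hyd₂⟩ := ihy
    rcases le_total (v₁ d₁) (v₁ d₂) with hd | hd
    · exact ⟨d₂, hd₂, v₁.map_add_le (hxd₁.trans hd) hyd₂⟩
    · exact ⟨d₁, hd₁, v₁.map_add_le hxd₁ (hyd₂.trans hd)⟩
  | neg x _ ih => simpa only [map_neg] using ih
  | mul x y _ _ ihx ihy =>
    obtain ⟨d₁, hd₁, hxd₁⟩ := ihx
    obtain ⟨d₂, hd₂, hyd₂⟩ := ihy
    exact ⟨d₁ * d₂, v₂.integer.mul_mem hd₁ hd₂, by simpa only [map_mul] using mul_le_mul' hxd₁ hyd₂⟩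

variable {K : Type*} [Field K] {v₁ : Valuation K Γ₁} {v₂ : Valuation K Γ₂}

theorem exists_map_le_and_one_le (h : Subring.closure ((v₁.integer : Set K) ∪ v₂.integer) = ⊤)
    {b : K} (hb : b ≠ 0) : ∃ z ≠ 0, v₁ z ≤ v₁ b ∧ 1 ≤ v₂ z := by
  obtain ⟨d, hd, hbd⟩ := exists_mem_integer_le_of_closure_eq_top h b⁻¹
  have hd0 : d ≠ 0 := by
    rintro rfl
    exact (v₁.pos_iff.2 (inv_ne_zero hb)).not_ge (by simpa using hbd)
  refine ⟨d⁻¹, inv_ne_zero hd0, ?_, ?_⟩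
  · simpa using inv_anti₀ (v₁.pos_iff.2 (inv_ne_zero hb)) hbd
  · simpa using (v₂.val_le_one_iff hd0).1 hd

theorem exists_map_le_and_le (h : Subring.closure ((v₁.integer : Set K) ∪ v₂.integer) = ⊤)
    {b c : K} (hb : b ≠ 0) (hc : c ≠ 0) : ∃ a ≠ 0, v₁ a ≤ v₁ b ∧ v₂ c ≤ v₂ a := by
  obtain ⟨z, hz0, hzb, hz⟩ := exists_map_le_and_one_le h hb
  obtain ⟨w, hw, hcw⟩ :=
    exists_mem_integer_le_of_closure_eq_top (Set.union_comm (α := K) _ _ ▸ h) c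
  have hw0 : w ≠ 0 := by
    rintro rfl
    exact (v₂.pos_iff.2 hc).not_ge (by simpa using hcw)
  refine ⟨z * w, mul_ne_zero hz0 hw0, ?_, ?_⟩
  · simpa only [map_mul, mul_one] using mul_le_mul' hzb hw
  · simpa only [map_mul, one_mul] using mul_le_mul' hz hcw

theorem exists_map_lt_one_and_one_lt [v₁.IsNontrivial] [v₂.IsNontrivial]
    (h : Subring.closure ((v₁.integer : Set K) ∪ v₂.integer) = ⊤) :
    ∃ a, v₁ a < 1 ∧ 1 < v₂ a := by
  obtain ⟨t₁, ht₁0, ht₁⟩ := IsNontrivial.exists_lt_one (v := v₁)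
  obtain ⟨t₂, ht₂⟩ := IsNontrivial.exists_one_lt (v := v₂)
  have ht₂0 : t₂ ≠ 0 := by rintro rfl; simp at ht₂
  obtain ⟨a, -, hat₁, hat₂⟩ := exists_map_le_and_le h ht₁0 ht₂0
  exact ⟨a, hat₁.trans_lt ht₁, ht₂.trans_le hat₂⟩

theorem exists_map_lt_and_lt [v₁.IsNontrivial] [v₂.IsNontrivial]
    (h : Subring.closure ((v₁.integer : Set K) ∪ v₂.integer) = ⊤)
    {b c : K} (hb : b ≠ 0) (hc : c ≠ 0) : ∃ a, v₁ a < v₁ b ∧ v₂ c < v₂ a := by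
  obtain ⟨a, ha0, hab, hca⟩ := exists_map_le_and_le h hb hc
  obtain ⟨a₀, ha₀₁, ha₀₂⟩ := exists_map_lt_one_and_one_lt h
  refine ⟨a * a₀, ?_, ?_⟩
  · rw [map_mul]
    exact (mul_lt_of_lt_one_right (v₁.pos_iff.2 ha0) ha₀₁).trans_le hab
  · rw [map_mul]
    exact hca.trans_lt (lt_mul_of_one_lt_right (v₂.pos_iff.2 ha0) ha₀₂)


theorem exists_map_lt_min_and_max_lt [v₁.IsNontrivial] [v₂.IsNontrivial]
    (h : Subring.closure ((v₁.integer : Set K) ∪ v₂.integer) = ⊤)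
    {b₁ b₂ c₁ c₂ : K} (hb₁ : b₁ ≠ 0) (hb₂ : b₂ ≠ 0) (hc₁ : c₁ ≠ 0) (hc₂ : c₂ ≠ 0) :
    ∃ a, v₁ a < min (v₁ b₁) (v₁ b₂) ∧ max (v₂ c₁) (v₂ c₂) < v₂ a := by
  obtain ⟨b, hb, hb_min⟩ : ∃ b ≠ 0, v₁ b = min (v₁ b₁) (v₁ b₂) :=
    (min_choice (v₁ b₁) (v₁ b₂)).elim (fun e ↦ ⟨b₁, hb₁, e.symm⟩) (fun e ↦ ⟨b₂, hb₂, e.symm⟩)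
  obtain ⟨c, hc, hc_max⟩ : ∃ c ≠ 0, v₂ c = max (v₂ c₁) (v₂ c₂) :=
    (max_choice (v₂ c₁) (v₂ c₂)).elim (fun e ↦ ⟨c₁, hc₁, e.symm⟩) (fun e ↦ ⟨c₂, hc₂, e.symm⟩)
  rw [← hb_min, ← hc_max]
  exact exists_map_lt_and_lt h hb hc

theorem exists_eq_mul_of_map_lt {x a : K} (hx : x ≠ 0) (ha₁ : v₁ a < 1)
    (hxa₁ : v₁ ((x - 1) * a) < 1) (hxa₂ : 1 < v₂ (x * a)) (hxa₂' : v₂ (x - 1) < v₂ (x * a)) :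
    ∃ u₁ u₂, v₁ (u₁ - 1) < 1 ∧ v₂ (u₂ - 1) < 1 ∧ x = u₁ * u₂ := by
  have h₁ : v₁ (1 + a) = 1 := v₁.map_one_add_of_lt ha₁
  have h₂ : v₂ (1 + x * a) = v₂ (x * a) := v₂.map_add_eq_of_lt_right (by rwa [map_one])
  have h₁0 : 1 + a ≠ 0 := v₁.ne_zero_iff.1 (h₁ ▸ one_ne_zero)
  have h₂0 : 1 + x * a ≠ 0 := v₂.ne_zero_iff.1 (h₂ ▸ (zero_lt_one.trans hxa₂).ne')
  refine ⟨(1 + x * a) / (1 + a), x * (1 + a) / (1 + x * a), ?_, ?_, by field_simp⟩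
  · rw [show (1 + x * a) / (1 + a) - 1 = (x - 1) * a / (1 + a) by field_simp; ring,
      map_div₀, h₁, div_one]
    exact hxa₁
  · rw [show x * (1 + a) / (1 + x * a) - 1 = (x - 1) / (1 + x * a) by field_simp; ring,
      map_div₀, h₂, div_lt_one₀ (zero_lt_one.trans hxa₂)]
    exact hxa₂'

end Valuation

/-- Approximation for independent nontrivial valuations:
`K^× = U¹_{v₁} · U¹_{v₂}`. -/
theorem stmt11 (K : Type*) [Field K] (Γ₁ Γ₂ : Type*)
    [LinearOrderedCommGroupWithZero Γ₁] [LinearOrderedCommGroupWithZero Γ₂]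
    (v₁ : Valuation K Γ₁) (v₂ : Valuation K Γ₂)
    (hnt₁ : ∃ z : K, z ≠ 0 ∧ v₁ z ≠ 1) (hnt₂ : ∃ z : K, z ≠ 0 ∧ v₂ z ≠ 1)
    (hind : Subring.closure ((v₁.integer : Set K) ∪ (v₂.integer : Set K)) = ⊤) :
    ∀ x : K, x ≠ 0 → ∃ u₁ u₂ : K,
      v₁ (u₁ - 1) < 1 ∧ v₂ (u₂ - 1) < 1 ∧ x = u₁ * u₂ := by
  intro x hx
  rcases eq_or_ne x 1 with rfl | hx1
  · exact ⟨1, 1, by simp, by simp, by simp⟩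
  have he : x - 1 ≠ 0 := sub_ne_zero.2 hx1
  have : v₁.IsNontrivial :=
    let ⟨z, hz, hz1⟩ := hnt₁; ⟨z, v₁.ne_zero_iff.2 hz, hz1⟩
  have : v₂.IsNontrivial :=
    let ⟨z, hz, hz1⟩ := hnt₂; ⟨z, v₂.ne_zero_iff.2 hz, hz1⟩
  obtain ⟨a, ha₁, ha₂⟩ := Valuation.exists_map_lt_min_and_max_lt hind one_ne_zero (inv_ne_zero he)
    (inv_ne_zero hx) (div_ne_zero he hx)
  rw [map_one, lt_min_iff] at ha₁
  rw [max_lt_iff] at ha₂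
  refine Valuation.exists_eq_mul_of_map_lt hx ha₁.1 ?_ ?_ ?_
  · simpa [he] using mul_lt_mul_of_pos_left ha₁.2 (v₁.pos_iff.2 he)
  · simpa [hx] using mul_lt_mul_of_pos_left ha₂.1 (v₂.pos_iff.2 hx)
  · simpa [hx, ← mul_div_assoc] using mul_lt_mul_of_pos_left ha₂.2 (v₂.pos_iff.2 hx)
end

section
/- Let $K$ be a field and $v_1, v_2$ two independent nontrivial valuations on $K$ (the subring generated by $\mathcal{O}_{v_1}$ and $\mathcal{O}_{v_2}$ equals $K$). If $g : K^\times \to \mathbb{Q}$ is a group homomorphism vanishing on $1 + \mathfrak{m}_{v_1}$ and on $1 + \mathfrak{m}_{v_2}$ (more precisely, on the nonzero elements of these sets), then $g = 0$. -/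
/-!
Independence lets one approximate simultaneously. Every element of the ring generated by the
two valuation rings has `v₁`-value bounded by that of some `v₂`-integer, so there are a
`v₂`-integer `b` of large `v₁`-value and a `v₁`-integer `a` of large `v₂`-value; with
`e = b / a`, `t = e / (1 + e)` is close to `1` for `v₁` and close to `0` for `v₂`.
For `x ≠ 0` the element `y = x t + (1 - t)` satisfies `y - x = (t - 1)(x - 1)` and
`y - 1 = t (x - 1)`, so `y` is close to `x` for `v₁` and to `1` for `v₂`. Hence `x = (x / y) · y`
is a product of a `v₁`-principal unit and a `v₂`-principal unit, on both of which `g` vanishes.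
-/

namespace Valuation

theorem exists_valuation_le_one_and_le {R : Type*} [Ring R] {Γ₁ Γ₂ : Type*}
    [LinearOrderedCommGroupWithZero Γ₁] [LinearOrderedCommGroupWithZero Γ₂]
    (v₁ : Valuation R Γ₁) (v₂ : Valuation R Γ₂)
    (hind : Subring.closure ((v₁.integer : Set R) ∪ (v₂.integer : Set R)) = ⊤) (z : R) :
    ∃ b, v₂ b ≤ 1 ∧ v₁ z ≤ v₁ b := by
  have hz : z ∈ Subring.closure ((v₁.integer : Set R) ∪ (v₂.integer : Set R)) := hind ▸ trivial
  induction hz using Subring.closure_induction with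
  | mem x hx =>
    rcases hx with hx | hx
    · exact ⟨1, by simp, by simpa using (v₁.mem_integer_iff x).mp hx⟩
    · exact ⟨x, hx, le_rfl⟩
  | zero => exact ⟨1, by simp, by simp⟩
  | one => exact ⟨1, by simp, by simp⟩
  | add x y _ _ ihx ihy =>
    obtain ⟨b, hb₂, hb₁⟩ := ihx
    obtain ⟨c, hc₂, hc₁⟩ := ihy
    rcases le_total (v₁ b) (v₁ c) with h | h
    · exact ⟨c, hc₂, v₁.map_add_le (hb₁.trans h) hc₁⟩
    · exact ⟨b, hb₂, v₁.map_add_le hb₁ (hc₁.trans h)⟩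
  | neg x _ ihx => simpa using ihx
  | mul x y _ _ ihx ihy =>
    obtain ⟨b, hb₂, hb₁⟩ := ihx
    obtain ⟨c, hc₂, hc₁⟩ := ihy
    exact ⟨b * c, by simpa using mul_le_one' hb₂ hc₂, by simpa using mul_le_mul' hb₁ hc₁⟩

variable {K : Type*} [Field K] {Γ₁ Γ₂ : Type*}
  [LinearOrderedCommGroupWithZero Γ₁] [LinearOrderedCommGroupWithZero Γ₂]
  (v₁ : Valuation K Γ₁) (v₂ : Valuation K Γ₂)

theorem exists_valuation_le_one_and_lt [v₁.IsNontrivial]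
    (hind : Subring.closure ((v₁.integer : Set K) ∪ (v₂.integer : Set K)) = ⊤)
    {r : K} (hr : r ≠ 0) : ∃ b, v₂ b ≤ 1 ∧ v₁ r < v₁ b := by
  obtain ⟨t, ht⟩ := IsNontrivial.exists_one_lt (v := v₁)
  obtain ⟨b, hb₂, hb₁⟩ := exists_valuation_le_one_and_le v₁ v₂ hind (t * r)
  refine ⟨b, hb₂, lt_of_lt_of_le ?_ hb₁⟩
  rw [v₁.map_mul]
  exact lt_mul_of_one_lt_left (zero_lt_iff.mpr (v₁.ne_zero_iff.mpr hr)) ht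

theorem exists_lt_valuation_and_valuation_lt [v₁.IsNontrivial] [v₂.IsNontrivial]
    (hind : Subring.closure ((v₁.integer : Set K) ∪ (v₂.integer : Set K)) = ⊤)
    {r s : K} (hr : r ≠ 0) (hs : s ≠ 0) : ∃ e, v₁ r < v₁ e ∧ v₂ e < v₂ s := by
  have hind' : Subring.closure ((v₂.integer : Set K) ∪ (v₁.integer : Set K)) = ⊤ := by
    rwa [Set.union_comm]
  obtain ⟨b, hb₂, hb₁⟩ := exists_valuation_le_one_and_lt v₁ v₂ hind hr
  obtain ⟨a, ha₁, ha₂⟩ := exists_valuation_le_one_and_lt v₂ v₁ hind' (inv_ne_zero hs)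
  have ha : 0 < v₂ a := lt_of_le_of_lt zero_le ha₂
  have ha' : 0 < v₁ a := zero_lt_iff.mpr (v₁.ne_zero_iff.mpr (v₂.ne_zero_iff.mp ha.ne'))
  refine ⟨b / a, ?_, ?_⟩
  · rw [v₁.map_div, lt_div_iff₀ ha']
    exact lt_of_le_of_lt (mul_le_of_le_one_right' ha₁) hb₁
  · rw [v₂.map_div, div_lt_iff₀ ha]
    calc v₂ b ≤ 1 := hb₂
      _ = v₂ s * v₂ s⁻¹ := by rw [map_inv₀, mul_inv_cancel₀ (v₂.ne_zero_iff.mpr hs)]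
      _ < v₂ s * v₂ a := mul_lt_mul_of_pos_left ha₂ (zero_lt_iff.mpr (v₂.ne_zero_iff.mpr hs))

theorem exists_valuation_sub_one_lt_and_valuation_lt [v₁.IsNontrivial] [v₂.IsNontrivial]
    (hind : Subring.closure ((v₁.integer : Set K) ∪ (v₂.integer : Set K)) = ⊤)
    {c d : K} (hc : c ≠ 0) (hd : d ≠ 0) : ∃ t, v₁ (t - 1) < v₁ c ∧ v₂ t < v₂ d := by
  obtain ⟨r, hr₁, hrc⟩ : ∃ r, 1 ≤ v₁ r ∧ v₁ c⁻¹ ≤ v₁ r := by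
    rcases le_total (v₁ c⁻¹) 1 with h | h
    · exact ⟨1, by simp, by simpa using h⟩
    · exact ⟨c⁻¹, h, le_rfl⟩
  obtain ⟨s, hs, hs₁, hsd⟩ : ∃ s ≠ 0, v₂ s ≤ 1 ∧ v₂ s ≤ v₂ d := by
    rcases le_total (v₂ d) 1 with h | h
    · exact ⟨d, hd, h, le_rfl⟩
    · exact ⟨1, one_ne_zero, by simp, by simpa using h⟩
  have hr : r ≠ 0 := v₁.ne_zero_iff.mp (lt_of_lt_of_le zero_lt_one hr₁).ne'
  obtain ⟨e, hre, hes⟩ := exists_lt_valuation_and_valuation_lt v₁ v₂ hind hr hs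
  have he₁ : v₁ (1 + e) = v₁ e := v₁.map_add_eq_of_lt_right (by simpa using hr₁.trans_lt hre)
  have he₂ : v₂ (1 + e) = 1 := v₂.map_one_add_of_lt (hes.trans_le hs₁)
  have he : 1 + e ≠ 0 := by
    rintro h
    simp [h] at he₂
  refine ⟨e / (1 + e), ?_, ?_⟩
  · rw [show e / (1 + e) - 1 = -(1 + e)⁻¹ by field_simp; ring, v₁.map_neg, map_inv₀, he₁]
    rw [map_inv₀] at hrc
    exact (inv_lt_comm₀ (lt_of_le_of_lt zero_le (hr₁.trans_lt hre))
      (zero_lt_iff.mpr (v₁.ne_zero_iff.mpr hc))).mpr (hrc.trans_lt hre)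
  · rw [v₂.map_div, he₂, div_one]
    exact hes.trans_le hsd

theorem exists_mul_eq_of_principal_units [v₁.IsNontrivial] [v₂.IsNontrivial]
    (hind : Subring.closure ((v₁.integer : Set K) ∪ (v₂.integer : Set K)) = ⊤) (u : Kˣ) :
    ∃ u₁ u₂ : Kˣ, v₁ ((u₁ : K) - 1) < 1 ∧ v₂ ((u₂ : K) - 1) < 1 ∧ u₁ * u₂ = u := by
  rcases eq_or_ne u 1 with rfl | hu
  · exact ⟨1, 1, by simp, by simp, mul_one 1⟩
  set x : K := (u : K)
  have hx : x ≠ 0 := u.ne_zero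
  have hx₁' : x - 1 ≠ 0 := sub_ne_zero.mpr (Units.val_eq_one.not.mpr hu)
  have hvx₁ : 0 < v₁ (x - 1) := zero_lt_iff.mpr (v₁.ne_zero_iff.mpr hx₁')
  have hvx₂ : 0 < v₂ (x - 1) := zero_lt_iff.mpr (v₂.ne_zero_iff.mpr hx₁')
  obtain ⟨t, ht₁, ht₂⟩ := exists_valuation_sub_one_lt_and_valuation_lt v₁ v₂ hind
    (div_ne_zero hx hx₁') (one_div_ne_zero hx₁')
  set y := x * t + (1 - t)
  have hyx : v₁ (y - x) < v₁ x := by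
    rw [show y - x = (t - 1) * (x - 1) by ring, v₁.map_mul, ← lt_div_iff₀ hvx₁, ← v₁.map_div]
    exact ht₁
  have hy₁ : v₂ (y - 1) < 1 := by
    rw [show y - 1 = t * (x - 1) by ring, v₂.map_mul, ← lt_div_iff₀ hvx₂, ← map_one v₂,
      ← v₂.map_div]
    exact ht₂
  have hvy : v₁ y = v₁ x := v₁.map_eq_of_sub_lt hyx
  have hy : y ≠ 0 := v₁.ne_zero_iff.mp (hvy ▸ v₁.ne_zero_iff.mpr hx)
  refine ⟨u * (Units.mk0 y hy)⁻¹, Units.mk0 y hy, ?_, hy₁, inv_mul_cancel_right _ _⟩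
  rw [Units.val_mul, Units.val_inv_eq_inv_val, Units.val_mk0, ← div_eq_mul_inv,
    div_sub_one hy, v₁.map_div, hvy, v₁.map_sub_swap, div_lt_one₀ (zero_lt_iff.mpr
    (v₁.ne_zero_iff.mpr hx))]
  exact hyx

end Valuation

/-- A homomorphism `K^× → ℚ` vanishing on the principal units of two independent
nontrivial valuations vanishes identically. -/
theorem stmt12 (K : Type*) [Field K] (Γ₁ Γ₂ : Type*)
    [LinearOrderedCommGroupWithZero Γ₁] [LinearOrderedCommGroupWithZero Γ₂]
    (v₁ : Valuation K Γ₁) (v₂ : Valuation K Γ₂)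
    (hnt₁ : ∃ z : K, z ≠ 0 ∧ v₁ z ≠ 1) (hnt₂ : ∃ z : K, z ≠ 0 ∧ v₂ z ≠ 1)
    (hind : Subring.closure ((v₁.integer : Set K) ∪ (v₂.integer : Set K)) = ⊤)
    (g : Kˣ → ℚ) (hg : ∀ a b : Kˣ, g (a * b) = g a + g b)
    (hg₁ : ∀ u : Kˣ, v₁ ((u : K) - 1) < 1 → g u = 0)
    (hg₂ : ∀ u : Kˣ, v₂ ((u : K) - 1) < 1 → g u = 0) :
    ∀ u : Kˣ, g u = 0 := by
  have : v₁.IsNontrivial := by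
    obtain ⟨z, hz, hz₁⟩ := hnt₁
    exact ⟨z, v₁.ne_zero_iff.mpr hz, hz₁⟩
  have : v₂.IsNontrivial := by
    obtain ⟨z, hz, hz₁⟩ := hnt₂
    exact ⟨z, v₂.ne_zero_iff.mpr hz, hz₁⟩
  intro u
  obtain ⟨u₁, u₂, hu₁, hu₂, rfl⟩ := v₁.exists_mul_eq_of_principal_units v₂ hind u
  rw [hg, hg₁ u₁ hu₁, hg₂ u₂ hu₂, add_zero]
end

section
/- Let $K$ be a field, $v$ a valuation on $K$ with unit group $\mathrm{U}_v$ and maximal ideal $\mathfrak{m}_v$, and let $f, g : K^\times \to \mathbb{Q}$ be group homomorphisms satisfying: (i) $f$ vanishes on $\mathrm{U}_v$; (ii) for every $a \in K^\times$ with $1 + a \neq 0$, one has $f(a) \cdot g(1+a) = f(1+a) \cdot g(a)$; (iii) for every $x \in K^\times$ with $v(x) > 0$, either $f(x) \neq 0$ or there exists $y \in K^\times$ with $0 < v(y) < v(x)$ and $f(y) \neq 0$. Then $g$ vanishes on all principal units: $g(1 + x) = 0$ for every $x$ with $v(x) > 0$. -/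
/-!
Since `f` kills `U_v`, it only depends on the value `v a`. If `f x ≠ 0`, relation (ii) for
`a = x` gives `g (1 + x) = 0` because `f (1 + x) = 0`. Otherwise pick `y` with `f y ≠ 0` and
`v x < v y < 1`; then `g (1 + y) = 0`, and `z = (1 + x)(1 + y) - 1 = y + x (1 + y)` has
`v z = v y`, hence `f z = f y ≠ 0`, so `g (1 + x) + g (1 + y) = g (1 + z) = 0`.
-/

namespace Valuation

variable {K Γ₀ : Type*} [Field K] [LinearOrderedCommGroupWithZero Γ₀] (v : Valuation K Γ₀)

theorem one_add_ne_zero_of_lt {x : K} (hx : v x < 1) : 1 + x ≠ 0 :=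
  (v.ne_zero_iff).mp (by rw [v.map_one_add_of_lt hx]; exact one_ne_zero)

theorem apply_eq_of_valuation_eq {M : Type*} [AddCommMonoid M] {f : Kˣ → M}
    (hf : ∀ a b : Kˣ, f (a * b) = f a + f b) (hfU : ∀ u : Kˣ, v (u : K) = 1 → f u = 0)
    {y z : Kˣ} (hyz : v (z : K) = v (y : K)) : f z = f y := by
  have hunit : v ((y⁻¹ * z : Kˣ) : K) = 1 := by
    rw [Units.val_mul, map_mul, hyz, Units.val_inv_eq_inv_val, map_inv₀,
      inv_mul_cancel₀ ((v.ne_zero_iff).mpr y.ne_zero)]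
  rw [← mul_inv_cancel_left y z, hf, hfU _ hunit, add_zero]

theorem apply_one_add_eq_zero_of_ne_zero {R : Type*} [CommRing R] [NoZeroDivisors R]
    {f g : Kˣ → R} (hfU : ∀ u : Kˣ, v (u : K) = 1 → f u = 0)
    (hfg : ∀ a b : Kˣ, (b : K) = 1 + (a : K) → f a * g b = f b * g a)
    {x u : Kˣ} (hx : v (x : K) < 1) (hu : (u : K) = 1 + (x : K)) (hfx : f x ≠ 0) :
    g u = 0 := by
  have hfu : f u = 0 := hfU u (by rw [hu, v.map_one_add_of_lt hx])
  have h := hfg x u hu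
  rw [hfu, zero_mul] at h
  exact (mul_eq_zero.mp h).resolve_left hfx

end Valuation

/-- If `f` vanishes on `U_v`, `(f, g)` satisfy the acl-pair determinant relation on
`(a, 1 + a)`, and `v` is the coarsest valuation with `f` trivial on its units, then
`g` vanishes on all principal units of `v`. -/
theorem stmt14 (K : Type*) [Field K] (Γ₀ : Type*) [LinearOrderedCommGroupWithZero Γ₀]
    (v : Valuation K Γ₀) (f g : Kˣ → ℚ)
    (hf : ∀ a b : Kˣ, f (a * b) = f a + f b)
    (hg : ∀ a b : Kˣ, g (a * b) = g a + g b)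
    (hfU : ∀ u : Kˣ, v (u : K) = 1 → f u = 0)
    (hfg : ∀ a b : Kˣ, (b : K) = 1 + (a : K) → f a * g b = f b * g a)
    (hcoarse : ∀ x : Kˣ, v (x : K) < 1 →
      f x ≠ 0 ∨ ∃ y : Kˣ, v (x : K) < v (y : K) ∧ v (y : K) < 1 ∧ f y ≠ 0) :
    ∀ x u : Kˣ, v (x : K) < 1 → (u : K) = 1 + (x : K) → g u = 0 := by
  intro x u hx hu
  rcases hcoarse x hx with hfx | ⟨y, hxy, hy, hfy⟩
  · exact v.apply_one_add_eq_zero_of_ne_zero hfU hfg hx hu hfx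
  set w : Kˣ := Units.mk0 (1 + (y : K)) (v.one_add_ne_zero_of_lt hy)
  have hgw : g w = 0 := v.apply_one_add_eq_zero_of_ne_zero hfU hfg hy rfl hfy
  have hvw : v (w : K) = 1 := v.map_one_add_of_lt hy
  have hvz : v ((u * w : Kˣ) - 1 : K) = v (y : K) := by
    have hz : ((u * w : Kˣ) - 1 : K) = y + x * w := by
      simp only [Units.val_mul, hu, w, Units.val_mk0]; ring
    rw [hz, v.map_add_eq_of_lt_left (by rwa [map_mul, hvw, mul_one])]
  set z : Kˣ := Units.mk0 ((u * w : Kˣ) - 1 : K)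
    ((v.ne_zero_iff).mp (hvz ▸ (v.ne_zero_iff).mpr y.ne_zero))
  have hfz : f z ≠ 0 := by rwa [v.apply_eq_of_valuation_eq hf hfU hvz]
  have hguw : g (u * w) = 0 :=
    v.apply_one_add_eq_zero_of_ne_zero hfU hfg (hvz ▸ hy) (by simp [z]) hfz
  rwa [hg, hgw, add_zero] at hguw
end

section
/- Let $k$ be a field of characteristic $0$, $K$ a field extension of $k$, and let $\Delta : K^\times \to \mathbb{P}^2(\mathbb{Q})$ be a map satisfying: (i) $\Delta(c \cdot t) = \Delta(t)$ for all $c \in k^\times$ and $t \in K^\times$; (ii) for all $t, u \in K^\times$ with $\Delta(t) \neq \Delta(u)$ and all $a, b \in k$ with $a t + b u \neq 0$, the point $\Delta(a t + b u)$ lies on the projective line through $\Delta(t)$ and $\Delta(u)$; (iii) there exist $x, y \in K^\times$ with $\Delta(1) = (1:0:0)$, $\Delta(x) = (1:1:0)$, $\Delta(y) = (1:0:1)$, $\Delta(1+x) = (0:1:0)$ and $\Delta(1+y) = (0:0:1)$. Then for all integers $m, n \geq 1$, the element $(m - n) + m x$ of $K$ is nonzero and $\Delta((m-n) + m x) = (n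 : m : 0)$; in particular every point $(1 : r : 0)$ with $r \in \mathbb{Q}$, $r > 0$, lies in the image of $\Delta$. -/
/-!
The conditions force `1, x, y` to be linearly independent (a relation would put `Δ x` or `Δ y`
on a line of `ℙ²(ℚ)` that misses it), so every `a + b x + c y` with `(b, c) ≠ 0` is a unit.
Each value of `Δ` is then the intersection point of two lines, obtained by writing the element in
two ways as a combination of elements whose values are already known: first
`Δ (x - y) = (0 : 1 : -1)`; then, by induction on `m`, `Δ ((m - 1) + m x) = (1 : m : 0)` together
with `Δ (m + m x + y) = (1 : m : 1)`; finally, by induction on `n`,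
`Δ ((m - n) + m x + y) = (n + 1 : m : 1)` and `Δ ((m - n - 1) + m x) = (n + 1 : m : 0)`.
-/

/-- The projective line in `ℙ²(ℚ)` through two points: points whose underlying
one-dimensional subspace lies in the span of the two given points. -/
def projLine (p q : Projectivization ℚ (Fin 3 → ℚ)) :
    Set (Projectivization ℚ (Fin 3 → ℚ)) :=
  {r | r.submodule ≤ p.submodule ⊔ q.submodule}

section

open Projectivization Matrix
open scoped LinearAlgebra.Projectivization

theorem dotProduct_crossProduct_eq_zero_of_mk_mem_projLine {u v w : Fin 3 → ℚ} {hu : u ≠ 0}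
    {hv : v ≠ 0} {hw : w ≠ 0} (h : mk ℚ u hu ∈ projLine (mk ℚ v hv) (mk ℚ w hw)) :
    u ⬝ᵥ v ⨯₃ w = 0 := by
  simp only [projLine, Set.mem_ofPred_eq, submodule_mk, ← Submodule.span_union,
    Set.singleton_union, Submodule.span_singleton_le_iff_mem, Submodule.mem_span_pair] at h
  obtain ⟨a, b, rfl⟩ := h
  simp [add_dotProduct, dot_self_cross, dot_cross_self]

theorem mk_ne_mk_of_crossProduct_ne_zero {F : Type*} [Field F] {v w : Fin 3 → F} {hv : v ≠ 0}
    {hw : w ≠ 0} (h : v ⨯₃ w ≠ 0) : mk F v hv ≠ mk F w hw :=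
  mt (mk_eq_mk_iff_crossProduct_eq_zero hv hw).1 h

/-- `v₁ ⨯₃ w₁` and `v₂ ⨯₃ w₂` are normal vectors of the two lines, so `hN` says that the lines
are distinct. -/
theorem eq_mk_of_mem_projLine_of_mem_projLine {r : ℙ ℚ (Fin 3 → ℚ)}
    {v₁ w₁ v₂ w₂ z : Fin 3 → ℚ} {hv₁ : v₁ ≠ 0} {hw₁ : w₁ ≠ 0} {hv₂ : v₂ ≠ 0} {hw₂ : w₂ ≠ 0}
    (hz : z ≠ 0) (hr₁ : r ∈ projLine (mk ℚ v₁ hv₁) (mk ℚ w₁ hw₁))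
    (hr₂ : r ∈ projLine (mk ℚ v₂ hv₂) (mk ℚ w₂ hw₂))
    (hz₁ : z ⬝ᵥ v₁ ⨯₃ w₁ = 0) (hz₂ : z ⬝ᵥ v₂ ⨯₃ w₂ = 0) (hN : v₁ ⨯₃ w₁ ⨯₃ (v₂ ⨯₃ w₂) ≠ 0) :
    r = mk ℚ z hz := by
  have eq_normal : ∀ {u : Fin 3 → ℚ} (hu : u ≠ 0), u ⬝ᵥ v₁ ⨯₃ w₁ = 0 → u ⬝ᵥ v₂ ⨯₃ w₂ = 0 →
      mk ℚ u hu = mk ℚ _ hN := by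
    intro u hu h₁ h₂
    rw [mk_eq_mk_iff_crossProduct_eq_zero, cross_cross_eq_smul_sub_smul', h₂, dotProduct_comm, h₁,
      zero_smul, zero_smul, sub_zero]
  induction r using Projectivization.ind with
  | h u hu =>
    rw [eq_normal hu (dotProduct_crossProduct_eq_zero_of_mk_mem_projLine hr₁)
      (dotProduct_crossProduct_eq_zero_of_mk_mem_projLine hr₂), eq_normal hz hz₁ hz₂]

variable {K : Type*} [Field K]

def PreservesLines (k : Subfield K) (Δ : Kˣ → ℙ ℚ (Fin 3 → ℚ)) : Prop :=
  ∀ t u : Kˣ, Δ t ≠ Δ u → ∀ a ∈ k, ∀ b ∈ k, ∀ s : Kˣ,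
    (s : K) = a * (t : K) + b * (u : K) → Δ s ∈ projLine (Δ t) (Δ u)

def HasValueAt (Δ : Kˣ → ℙ ℚ (Fin 3 → ℚ)) (z : K) (p : ℙ ℚ (Fin 3 → ℚ)) : Prop :=
  z ≠ 0 ∧ ∀ s : Kˣ, (s : K) = z → Δ s = p

variable {k : Subfield K} {Δ : Kˣ → ℙ ℚ (Fin 3 → ℚ)}

theorem hasValueAt_of_coe_eq {t : Kˣ} {z : K} (ht : (t : K) = z) : HasValueAt Δ z (Δ t) :=
  ⟨ht ▸ t.ne_zero, fun _ hs => congrArg Δ (Units.ext (hs.trans ht.symm))⟩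

theorem HasValueAt.mem_projLine (hΔ : PreservesLines k Δ) {t u : K} {p q : ℙ ℚ (Fin 3 → ℚ)}
    (ht : HasValueAt Δ t p) (hu : HasValueAt Δ u q) (hpq : p ≠ q) (a b : ℚ) {s : Kˣ}
    (hs : (s : K) = a * t + b * u) : Δ s ∈ projLine p q := by
  have hΔt := ht.2 (Units.mk0 t ht.1) rfl
  have hΔu := hu.2 (Units.mk0 u hu.1) rfl
  rw [← hΔt, ← hΔu] at hpq ⊢
  exact hΔ _ _ hpq _ (SubfieldClass.ratCast_mem k a) _ (SubfieldClass.ratCast_mem k b) s hs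

theorem HasValueAt.of_eq_add_of_eq_add (hΔ : PreservesLines k Δ) {z t₁ u₁ t₂ u₂ : K}
    {v₁ w₁ v₂ w₂ v : Fin 3 → ℚ} {hv₁ : v₁ ≠ 0} {hw₁ : w₁ ≠ 0} {hv₂ : v₂ ≠ 0} {hw₂ : w₂ ≠ 0}
    {hv : v ≠ 0} (hz : z ≠ 0)
    (ht₁ : HasValueAt Δ t₁ (mk ℚ v₁ hv₁)) (hu₁ : HasValueAt Δ u₁ (mk ℚ w₁ hw₁)) (a₁ b₁ : ℚ)
    (hz₁ : z = a₁ * t₁ + b₁ * u₁)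
    (ht₂ : HasValueAt Δ t₂ (mk ℚ v₂ hv₂)) (hu₂ : HasValueAt Δ u₂ (mk ℚ w₂ hw₂)) (a₂ b₂ : ℚ)
    (hz₂ : z = a₂ * t₂ + b₂ * u₂)
    (hN : v₁ ⨯₃ w₁ ⨯₃ (v₂ ⨯₃ w₂) ≠ 0) (h₁ : v ⬝ᵥ v₁ ⨯₃ w₁ = 0) (h₂ : v ⬝ᵥ v₂ ⨯₃ w₂ = 0) :
    HasValueAt Δ z (mk ℚ v hv) := by
  have hvw₁ : v₁ ⨯₃ w₁ ≠ 0 := fun h => hN (by simp [h])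
  have hvw₂ : v₂ ⨯₃ w₂ ≠ 0 := fun h => hN (by simp [h])
  exact ⟨hz, fun s hs => eq_mk_of_mem_projLine_of_mem_projLine hv
    (ht₁.mem_projLine hΔ hu₁ (mk_ne_mk_of_crossProduct_ne_zero hvw₁) a₁ b₁ (hs.trans hz₁))
    (ht₂.mem_projLine hΔ hu₂ (mk_ne_mk_of_crossProduct_ne_zero hvw₂) a₂ b₂ (hs.trans hz₂))
    h₁ h₂ hN⟩

structure IsNormalizedAt (k : Subfield K) (Δ : Kˣ → ℙ ℚ (Fin 3 → ℚ)) (x y : K) : Prop where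
  intro :: -- keeps `mk` free for `Projectivization.mk` inside the namespace
  preservesLines : PreservesLines k Δ
  hasValueAt_one : HasValueAt Δ 1 (mk ℚ ![1, 0, 0] (by simp))
  hasValueAt_x : HasValueAt Δ x (mk ℚ ![1, 1, 0] (by simp))
  hasValueAt_y : HasValueAt Δ y (mk ℚ ![1, 0, 1] (by simp))
  hasValueAt_one_add_x : HasValueAt Δ (1 + x) (mk ℚ ![0, 1, 0] (by simp))
  hasValueAt_one_add_y : HasValueAt Δ (1 + y) (mk ℚ ![0, 0, 1] (by simp))

namespace IsNormalizedAt

variable {x y : K} [CharZero K]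

theorem ne_zero_of_eq_add_mul_add_mul (h : IsNormalizedAt k Δ x y) (a b c : ℚ)
    (hbc : b ≠ 0 ∨ c ≠ 0) {z : K} (hz : z = a + b * x + c * y) : z ≠ 0 := by
  rintro rfl
  by_cases hc : c = 0
  · subst hc
    have hb : (b : K) ≠ 0 := by exact_mod_cast hbc.resolve_right (not_not.2 rfl)
    have hmem := h.hasValueAt_one.mem_projLine h.preservesLines h.hasValueAt_y
      (mk_ne_mk_of_crossProduct_ne_zero (by simp [cross_apply])) (-a / b) 0
      (s := Units.mk0 x h.hasValueAt_x.1)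
      (by rw [Units.val_mk0]; push_cast at hz ⊢; field_simp; linear_combination -hz)
    rw [h.hasValueAt_x.2 _ rfl] at hmem
    simpa [cross_apply] using dotProduct_crossProduct_eq_zero_of_mk_mem_projLine hmem
  · have hc : (c : K) ≠ 0 := by exact_mod_cast hc
    have hmem := h.hasValueAt_one.mem_projLine h.preservesLines h.hasValueAt_x
      (mk_ne_mk_of_crossProduct_ne_zero (by simp [cross_apply])) (-a / c) (-b / c)
      (s := Units.mk0 y h.hasValueAt_y.1)
      (by rw [Units.val_mk0]; push_cast at hz ⊢; field_simp; linear_combination -hz)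
    rw [h.hasValueAt_y.2 _ rfl] at hmem
    simpa [cross_apply] using dotProduct_crossProduct_eq_zero_of_mk_mem_projLine hmem

theorem hasValueAt_sub (h : IsNormalizedAt k Δ x y) :
    HasValueAt Δ (x - y) (mk ℚ ![0, 1, -1] (by simp)) :=
  h.hasValueAt_x.of_eq_add_of_eq_add h.preservesLines
    (h.ne_zero_of_eq_add_mul_add_mul 0 1 (-1) (by norm_num) (by push_cast; ring))
    h.hasValueAt_y 1 (-1) (by push_cast; ring)
    h.hasValueAt_one_add_x h.hasValueAt_one_add_y 1 (-1) (by push_cast; ring)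
    (by simp [cross_apply]) (by simp [cross_apply]) (by simp [cross_apply])

theorem hasValueAt_add_mul_add (h : IsNormalizedAt k Δ x y) {m : ℕ}
    (hC : HasValueAt Δ ((m : K) - 1 + m * x) (mk ℚ ![1, m, 0] (by simp))) :
    HasValueAt Δ ((m : K) + m * x + y) (mk ℚ ![1, m, 1] (by simp)) :=
  h.hasValueAt_one_add_x.of_eq_add_of_eq_add h.preservesLines
    (h.ne_zero_of_eq_add_mul_add_mul m m 1 (by simp) (by push_cast; ring))
    h.hasValueAt_y m 1 (by push_cast; ring)
    hC h.hasValueAt_one_add_y 1 1 (by push_cast; ring)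
    (by simp [cross_apply]) (by simp [cross_apply]) (by simp [cross_apply])

theorem hasValueAt_sub_one_add_mul (h : IsNormalizedAt k Δ x y) {m : ℕ} (hm : 1 ≤ m) :
    HasValueAt Δ ((m : K) - 1 + m * x) (mk ℚ ![1, m, 0] (by simp)) := by
  induction m, hm using Nat.le_induction with
  | base => simpa using h.hasValueAt_x
  | succ m hm hC =>
    exact (h.hasValueAt_add_mul_add hC).of_eq_add_of_eq_add h.preservesLines
      (h.ne_zero_of_eq_add_mul_add_mul m (m + 1) 0 (by left; positivity) (by push_cast; ring))
      h.hasValueAt_sub 1 1 (by push_cast; ring)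
      hC h.hasValueAt_one_add_x 1 1 (by push_cast; ring)
      (by simp [cross_apply]) (by simp [cross_apply]) (by simp [cross_apply])

theorem hasValueAt_sub_succ_add_mul (h : IsNormalizedAt k Δ x y) {m n : ℕ} (hm : 1 ≤ m)
    (hD : HasValueAt Δ ((m : K) - n + m * x + y) (mk ℚ ![(n : ℚ) + 1, m, 1] (by simp))) :
    HasValueAt Δ ((m : K) - (n + 1 : ℕ) + m * x)
      (mk ℚ ![((n + 1 : ℕ) : ℚ), m, 0] (by simp [Nat.cast_add_one_ne_zero])) :=
  hD.of_eq_add_of_eq_add h.preservesLines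
    (h.ne_zero_of_eq_add_mul_add_mul (m - (n + 1)) m 0 (by left; positivity) (by push_cast; ring))
    h.hasValueAt_one_add_y 1 (-1) (by push_cast; ring)
    h.hasValueAt_one h.hasValueAt_x (m - (n + 1)) m (by push_cast; ring)
    (by simp [cross_apply, Nat.one_le_iff_ne_zero.mp hm]) (by simp [cross_apply]; ring)
    (by simp [cross_apply])

theorem hasValueAt_sub_succ_add_mul_add (h : IsNormalizedAt k Δ x y) {m n : ℕ} (hm : 1 ≤ m)
    (hC : HasValueAt Δ ((m : K) - (n + 1 : ℕ) + m * x)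
      (mk ℚ ![((n + 1 : ℕ) : ℚ), m, 0] (by simp [Nat.cast_add_one_ne_zero])))
    (hD : HasValueAt Δ ((m : K) - n + m * x + y) (mk ℚ ![(n : ℚ) + 1, m, 1] (by simp))) :
    HasValueAt Δ ((m : K) - (n + 1 : ℕ) + m * x + y)
      (mk ℚ ![((n + 1 : ℕ) : ℚ) + 1, m, 1] (by simp)) :=
  hC.of_eq_add_of_eq_add h.preservesLines
    (h.ne_zero_of_eq_add_mul_add_mul (m - (n + 1)) m 1 (by simp) (by push_cast; ring))
    h.hasValueAt_y 1 1 (by push_cast; ring)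
    hD h.hasValueAt_one 1 (-1) (by push_cast; ring)
    (by simp [cross_apply]; omega) (by simp [cross_apply]; ring) (by simp [cross_apply])

theorem hasValueAt_sub_add_mul_add (h : IsNormalizedAt k Δ x y) {m : ℕ} (hm : 1 ≤ m) :
    ∀ n : ℕ, HasValueAt Δ ((m : K) - n + m * x + y) (mk ℚ ![(n : ℚ) + 1, m, 1] (by simp))
  | 0 => by simpa using h.hasValueAt_add_mul_add (h.hasValueAt_sub_one_add_mul hm)
  | n + 1 =>
    have hD := h.hasValueAt_sub_add_mul_add hm n
    h.hasValueAt_sub_succ_add_mul_add hm (h.hasValueAt_sub_succ_add_mul hm hD) hD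

theorem hasValueAt_sub_add_mul (h : IsNormalizedAt k Δ x y) {m n : ℕ} (hm : 1 ≤ m)
    (hn : 1 ≤ n) : HasValueAt Δ ((m : K) - n + m * x) (mk ℚ ![(n : ℚ), m, 0] (by simp; omega)) := by
  obtain ⟨n, rfl⟩ := Nat.exists_eq_add_of_le' hn
  exact h.hasValueAt_sub_succ_add_mul hm (h.hasValueAt_sub_add_mul_add hm n)

end IsNormalizedAt

end

/-- Key claim computation of Bogomolov-type: a map `Δ : K^× → ℙ²(ℚ)`, constant on
`k^×`-cosets, mapping projective lines to projective lines, with the prescribed values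
at `1, x, y, 1+x, 1+y`, satisfies `Δ((m-n) + m·x) = (n : m : 0)` for all `m, n ≥ 1`;
in particular every point `(1 : r : 0)` with `r ∈ ℚ`, `r > 0`, is in the image. -/
theorem stmt16 (K : Type*) [Field K] [CharZero K] (k : Subfield K)
    (Δ : Kˣ → Projectivization ℚ (Fin 3 → ℚ))
    (hline : ∀ t u : Kˣ, Δ t ≠ Δ u → ∀ a ∈ k, ∀ b ∈ k, ∀ s : Kˣ,
      (s : K) = a * (t : K) + b * (u : K) → Δ s ∈ projLine (Δ t) (Δ u))
    (x y e ex ey : Kˣ)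
    (he : (e : K) = 1) (hex : (ex : K) = 1 + (x : K)) (hey : (ey : K) = 1 + (y : K))
    (h1 : Δ e = Projectivization.mk ℚ ![1, 0, 0] (fun hc => by simpa using congrFun hc 0))
    (hx : Δ x = Projectivization.mk ℚ ![1, 1, 0] (fun hc => by simpa using congrFun hc 0))
    (hy : Δ y = Projectivization.mk ℚ ![1, 0, 1] (fun hc => by simpa using congrFun hc 0))
    (h1x : Δ ex = Projectivization.mk ℚ ![0, 1, 0] (fun hc => by simpa using congrFun hc 1))
    (h1y : Δ ey = Projectivization.mk ℚ ![0, 0, 1] (fun hc => by simpa using congrFun hc 2)) :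
    (∀ (m n : ℕ) (hm : 1 ≤ m) (hn : 1 ≤ n),
      ((m : K) - (n : K) + (m : K) * (x : K) ≠ 0) ∧
      ∀ s : Kˣ, (s : K) = (m : K) - (n : K) + (m : K) * (x : K) →
        Δ s = Projectivization.mk ℚ ![(n : ℚ), (m : ℚ), 0]
          (fun hc => by have h2 := congrFun hc 1; simp at h2; omega)) ∧
    (∀ r : ℚ, 0 < r → ∃ s : Kˣ,
      Δ s = Projectivization.mk ℚ ![1, r, 0] (fun hc => by simpa using congrFun hc 0)) := by
  have h : IsNormalizedAt k Δ x y :=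
    ⟨hline, h1 ▸ hasValueAt_of_coe_eq he, hx ▸ hasValueAt_of_coe_eq rfl,
      hy ▸ hasValueAt_of_coe_eq rfl, h1x ▸ hasValueAt_of_coe_eq hex,
      h1y ▸ hasValueAt_of_coe_eq hey⟩
  refine ⟨fun m n hm hn => h.hasValueAt_sub_add_mul hm hn, fun r hr => ?_⟩
  have hnum : 0 < r.num := Rat.num_pos.2 hr
  obtain ⟨hz, hΔ⟩ := h.hasValueAt_sub_add_mul (m := r.num.toNat) (by omega) r.den_pos
  refine ⟨Units.mk0 _ hz,
    (hΔ _ rfl).trans ((Projectivization.mk_eq_mk_iff_crossProduct_eq_zero _ _).2 ?_)⟩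
  have hm : ((r.num.toNat : ℕ) : ℚ) = r.num := by exact_mod_cast Int.toNat_of_nonneg hnum.le
  simp [cross_apply, hm]
end
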